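/- Let 0 → K → (kG)^{⊕r} → X → 0 be a short exact sequence of kG-modules, and let j: K → A_n^{⊕r} be the composition of the inclusion K → (kG)^{⊕r} with the injective A_n-linear map (kG)^{⊕r} → A_n^{⊕r} induced in each coordinate by the map kG = A_n/tA_n → A_n given by multiplication by t^{n-1} (i.e., a mod tA_n ↦ t^{n-1}a). Then j is injective, and writing F for the cokernel A_n^{⊕r}/j(K), the kG-module t^{n-1}F is isomorphic to X. -/

import Mathlib

open scoped TensorProduct DirectSum

noncomputable section

variable (S : Type) [CommRing S] [IsDomain S] [IsDiscreteValuationRing S]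
variable (t : S)
variable (G : Type) [Group G] [Fintype G]

/-- `Rq n` is the quotient ring `R_n = S/(t^n)`. -/
abbrev Rq (n : ℕ) : Type := S ⧸ Ideal.span {t ^ n}

/-- `Aq n` is the group algebra `A_n = R_n G`. -/
abbrev Aq (n : ℕ) : Type := MonoidAlgebra (Rq S t n) G

/-- The canonical surjection `R_n → R_i` for `i ≤ n`. -/
def Rmap (i n : ℕ) (h : i ≤ n) : Rq S t n →+* Rq S t i :=
  Ideal.Quotient.factor (Ideal.span_singleton_le_span_singleton.mpr (pow_dvd_pow t h))

/-- The canonical surjection `A_n → A_i` for `i ≤ n`, induced by `R_n → R_i`. -/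
def Amap (i n : ℕ) (h : i ≤ n) : Aq S t G n →+* Aq S t G i :=
  letI : Algebra (Rq S t n) (Aq S t G i) :=
    RingHom.toAlgebra' ((algebraMap (Rq S t i) (Aq S t G i)).comp (Rmap S t i n h))
      (fun r x => Algebra.commutes (Rmap S t i n h r) x)
  ((MonoidAlgebra.lift (Rq S t n) (Aq S t G i) G) (MonoidAlgebra.of (Rq S t i) G)).toRingHom

/-- The augmentation map `A_n → R_n`, `Σ r_g g ↦ Σ r_g`. -/
def aug (n : ℕ) : Aq S t G n →+* Rq S t n :=
  ((MonoidAlgebra.lift (Rq S t n) (Rq S t n) G) 1).toRingHom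

/-- The image of `t` in `R_n`. -/
def tbar (n : ℕ) : Rq S t n := Ideal.Quotient.mk _ t

/-- The norm element `Σ_{g ∈ G} g` of `A_n`. -/
def sigmaEl (n : ℕ) : Aq S t G n := ∑ g : G, MonoidAlgebra.of (Rq S t n) G g

/-- The element `t^{i-1} Σ_{g ∈ G} g` of `A_i`. -/
def wEl (i : ℕ) : Aq S t G i :=
  algebraMap (Rq S t i) (Aq S t G i) (tbar S t i ^ (i - 1)) * sigmaEl S t G i

/-- `W_i = A_i/⟨t^{i-1} Σ_{g∈G} g⟩`. -/
abbrev Wmod (i : ℕ) : Type :=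
  Aq S t G i ⧸ Submodule.span (Aq S t G i) {wEl S t G i}

/-- The submodule `t^m X` of an `A_n`-module `X`. -/
def tSub (n m : ℕ) (X : Type) [AddCommGroup X] [Module (Aq S t G n) X] :
    Submodule (Aq S t G n) X :=
  Submodule.span (Aq S t G n)
    (Set.range fun x : X => algebraMap (Rq S t n) (Aq S t G n) (tbar S t n ^ m) • x)

/-!
Write `T = t^{n-1} ∈ A_n`. Since `S` is a domain, `T * a = 0` exactly when `a` vanishes in `A_1`,
so multiplication by `T` factors through an injective `A_n`-linear map `μ : kG → A_n` with image
`T A_n`. Applied coordinatewise, `μ` identifies `(kG)^r` with `T A_n^r` and `ι(K)` with `j(K)`;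
hence `t^{n-1}F`, the image of `T A_n^r` in `F`, is `A_n`-isomorphic to `(kG)^r / ι(K) ≅ X`, and
its `kG`-structure is transported along this isomorphism.
-/

section QuotientRings

variable (S : Type) [CommRing S] (t : S) (G : Type) [Group G]

lemma Rmap_surjective (i n : ℕ) (h : i ≤ n) : Function.Surjective (Rmap S t i n h) :=
  Ideal.Quotient.factor_surjective _

lemma Amap_single (i n : ℕ) (h : i ≤ n) (g : G) (r : Rq S t n) :
    Amap S t G i n h (MonoidAlgebra.single g r) = MonoidAlgebra.single g (Rmap S t i n h r) := by
  simp only [Amap, AlgHom.toRingHom_eq_coe, RingHom.coe_coe, MonoidAlgebra.lift_single,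
    Algebra.smul_def, RingHom.algebraMap_toAlgebra', RingHom.coe_comp, Function.comp_apply,
    MonoidAlgebra.coe_algebraMap, MonoidAlgebra.of_apply, MonoidAlgebra.single_mul_single,
    one_mul, mul_one, RingHom.id_apply]

lemma Amap_coeff (i n : ℕ) (h : i ≤ n) (a : Aq S t G n) (g : G) :
    (Amap S t G i n h a).coeff g = Rmap S t i n h (a.coeff g) := by
  induction a using MonoidAlgebra.induction with
  | zero => simp
  | single_add g' r f _ _ ih =>
    classical
    simp only [map_add, Amap_single, MonoidAlgebra.coeff_add, Finsupp.add_apply, ih,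
      MonoidAlgebra.coeff_single, Finsupp.single_apply, apply_ite (Rmap S t i n h), map_zero]

lemma Amap_surjective (i n : ℕ) (h : i ≤ n) : Function.Surjective (Amap S t G i n h) := by
  intro x
  induction x using MonoidAlgebra.induction with
  | zero => exact ⟨0, map_zero _⟩
  | single_add g r f _ _ ih =>
    obtain ⟨a, rfl⟩ := ih
    obtain ⟨r, rfl⟩ := Rmap_surjective S t i n h r
    exact ⟨MonoidAlgebra.single g r + a, by rw [map_add, Amap_single]⟩

variable [IsDomain S] {t}

lemma tbar_pow_pred_mul_eq_zero_iff (ht : t ≠ 0) {n : ℕ} (hn : 1 ≤ n) (r : Rq S t n) :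
    tbar S t n ^ (n - 1) * r = 0 ↔ Rmap S t 1 n hn r = 0 := by
  obtain ⟨s, rfl⟩ := Ideal.Quotient.mk_surjective r
  have hpow : t ^ n = t ^ (n - 1) * t := by rw [← pow_succ, Nat.sub_add_cancel hn]
  rw [tbar, ← map_pow, ← map_mul]
  change _ ↔ Ideal.Quotient.mk _ s = 0
  simp only [Ideal.Quotient.eq_zero_iff_mem, Ideal.mem_span_singleton, pow_one, hpow]
  exact mul_dvd_mul_iff_left (pow_ne_zero _ ht)

lemma algebraMap_tbar_pow_pred_mul_eq_zero_iff (ht : t ≠ 0) {n : ℕ} (hn : 1 ≤ n)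
    (a : Aq S t G n) :
    algebraMap (Rq S t n) (Aq S t G n) (tbar S t n ^ (n - 1)) * a = 0 ↔
      Amap S t G 1 n hn a = 0 := by
  rw [← Algebra.smul_def, ← MonoidAlgebra.coeff_eq_zero, ← MonoidAlgebra.coeff_eq_zero,
    MonoidAlgebra.coeff_smul, Finsupp.ext_iff, Finsupp.ext_iff]
  refine forall_congr' fun g => ?_
  rw [Amap_coeff]
  exact tbar_pow_pred_mul_eq_zero_iff S ht hn _

end QuotientRings

section RingsActingThroughQuotient

variable {A M : Type*} [Ring A] [AddCommGroup M] [Module A M]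

lemma exists_linearMap_apply_eq_mul {f : A →ₗ[A] M} (hf : Function.Surjective f) {T : A}
    (hT : ∀ a, f a = 0 → a * T = 0) : ∃ μ : M →ₗ[A] A, ∀ a, μ (f a) = a * T := by
  let e := f.quotKerEquivOfSurjective hf
  refine ⟨(LinearMap.ker f).liftQ (LinearMap.toSpanSingleton A A T) (fun a => hT a) ∘ₗ e.symm,
    fun a => ?_⟩
  have he : e.symm (f a) = Submodule.Quotient.mk a := e.symm_apply_eq.mpr rfl
  rw [LinearMap.comp_apply, LinearEquiv.coe_coe, he]
  rfl

lemma injective_of_apply_eq_mul {f : A →ₗ[A] M} (hf : Function.Surjective f) {T : A}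
    (hT : ∀ a, a * T = 0 → f a = 0) {μ : M →ₗ[A] A} (hμ : ∀ a, μ (f a) = a * T) :
    Function.Injective μ := by
  refine (injective_iff_map_eq_zero μ).mpr fun m hm => ?_
  obtain ⟨a, rfl⟩ := hf m
  exact hT a (hμ a ▸ hm)

lemma range_compLeft_eq_range_smul {f : A →ₗ[A] M} (hf : Function.Surjective f) {T : A}
    {μ : M →ₗ[A] A} (hμ : ∀ a, μ (f a) = T * a) (I : Type*) :
    Set.range (μ.compLeft I) = Set.range fun v : I → A => T • v := by
  ext v
  constructor
  · rintro ⟨w, rfl⟩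
    choose a ha using fun i => hf (w i)
    exact ⟨a, funext fun i => by simp [← ha, hμ]⟩
  · rintro ⟨v, rfl⟩
    exact ⟨fun i => f (v i), funext fun i => hμ (v i)⟩

end RingsActingThroughQuotient

section QuotientOfImage

variable {R M M' : Type*} [Ring R] [AddCommGroup M] [Module R M] [AddCommGroup M'] [Module R M']

lemma span_range_smul_eq_range_mkQ_comp (Q : Submodule R M') (T : R) {g : M →ₗ[R] M'}
    (hg : Set.range g = Set.range fun v : M' => T • v) :
    Submodule.span R (Set.range fun x : M' ⧸ Q => T • x) = LinearMap.range (Q.mkQ ∘ₗ g) := by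
  have : (Set.range fun x : M' ⧸ Q => T • x) = Q.mkQ '' Set.range fun v : M' => T • v := by
    rw [← Set.range_comp]
    exact (Submodule.mkQ_surjective Q).range_comp _ |>.symm.trans rfl
  rw [this, ← hg, ← Set.range_comp, ← LinearMap.coe_comp]
  exact Submodule.span_eq (LinearMap.range _)

end QuotientOfImage

lemma exists_module_linearEquiv_of_restrictScalars {A B N X : Type*} [Ring A] [Ring B]
    (φ : A →+* B) [AddCommGroup N] [Module A N] [AddCommGroup X] [Module A X] [Module B X]
    (hX : ∀ (a : A) (x : X), φ a • x = a • x) (e : N ≃ₗ[A] X) :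
    ∃ inst : Module B N, (∀ (a : A) (y : N), letI := inst; φ a • y = a • y) ∧
      letI := inst; Nonempty (N ≃ₗ[B] X) := by
  let _ : SMul B N := ⟨fun b y => e.symm (b • e y)⟩
  have he : ∀ (b : B) (y : N), e (b • y) = b • e y := fun b y => e.apply_symm_apply _
  let inst := e.injective.module B e.toAddMonoidHom he
  refine ⟨inst, fun a y => e.injective ?_, ⟨{ e with map_smul' := he }⟩⟩
  rw [he, hX, e.map_smul]

/-- Let `0 → K → (kG)^{⊕r} → X → 0` be a short exact sequence of
`kG`-modules, and let `j : K → A_n^{⊕r}` be the composition of the inclusion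
`K → (kG)^{⊕r}` with the injective `A_n`-linear map `(kG)^{⊕r} → A_n^{⊕r}` induced in each
coordinate by the map `kG = A_n/tA_n → A_n`, `a mod tA_n ↦ t^{n-1}a`.  Then `j` is
injective, and writing `F` for the cokernel `A_n^{⊕r}/j(K)`, the `kG`-module `t^{n-1}F`
is isomorphic to `X`. -/
theorem statement12 (ht : Irreducible t) (n : ℕ) (hn : 1 ≤ n) (r : ℕ)
    (K X : Type) [AddCommGroup K] [Module (Aq S t G 1) K]
    [AddCommGroup X] [Module (Aq S t G 1) X]
    (ι : K →ₗ[Aq S t G 1] (Fin r → Aq S t G 1))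
    (π : (Fin r → Aq S t G 1) →ₗ[Aq S t G 1] X)
    (hι : Function.Injective ι) (hπ : Function.Surjective π)
    (hexact : LinearMap.range ι = LinearMap.ker π) :
    letI : Module (Aq S t G n) (Aq S t G 1) := Module.compHom _ (Amap S t G 1 n hn)
    (∃ μ : Aq S t G 1 →ₗ[Aq S t G n] Aq S t G n,
        ∀ a : Aq S t G n,
          μ (Amap S t G 1 n hn a) =
            algebraMap (Rq S t n) (Aq S t G n) (tbar S t n ^ (n - 1)) * a) ∧
      ∀ μ : Aq S t G 1 →ₗ[Aq S t G n] Aq S t G n,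
        (∀ a : Aq S t G n,
          μ (Amap S t G 1 n hn a) =
            algebraMap (Rq S t n) (Aq S t G n) (tbar S t n ^ (n - 1)) * a) →
        Function.Injective (fun x : K => fun i : Fin r => μ (ι x i)) ∧
          ∃ inst : Module (Aq S t G 1)
              ↥(tSub S t G n (n - 1)
                ((Fin r → Aq S t G n) ⧸
                  Submodule.span (Aq S t G n)
                    (Set.range fun x : K => fun i : Fin r => μ (ι x i)))),
            (∀ (a : Aq S t G n)
              (y : ↥(tSub S t G n (n - 1)
                ((Fin r → Aq S t G n) ⧸
                  Submodule.span (Aq S t G n)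
                    (Set.range fun x : K => fun i : Fin r => μ (ι x i))))),
              letI := inst
              Amap S t G 1 n hn a • y = a • y) ∧
            letI := inst
            Nonempty
              (↥(tSub S t G n (n - 1)
                  ((Fin r → Aq S t G n) ⧸
                    Submodule.span (Aq S t G n)
                      (Set.range fun x : K => fun i : Fin r => μ (ι x i))))
                ≃ₗ[Aq S t G 1] X) := by
  set A := Aq S t G n
  set B := Aq S t G 1
  set φ := Amap S t G 1 n hn
  let _ : Module A B := Module.compHom B φ
  set T : A := algebraMap (Rq S t n) A (tbar S t n ^ (n - 1))
  have hTcomm : ∀ a : A, a * T = T * a := fun a => (Algebra.commutes _ a).symm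
  have hTφ : ∀ a : A, a * T = 0 ↔ φ a = 0 := fun a =>
    hTcomm a ▸ algebraMap_tbar_pow_pred_mul_eq_zero_iff S G ht.ne_zero hn a
  have hφ : Function.Surjective φ := Amap_surjective S t G 1 n hn
  let φA : A →ₗ[A] B := { φ with map_smul' := map_mul φ }
  refine ⟨?_, fun μ hμ => ?_⟩
  · obtain ⟨μ, hμ⟩ := exists_linearMap_apply_eq_mul (f := φA) hφ fun a => (hTφ a).mpr
    exact ⟨μ, fun a => (hμ a).trans (hTcomm a)⟩
  have hμinj : Function.Injective μ := injective_of_apply_eq_mul (f := φA) hφ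
    (fun a => (hTφ a).mp) (fun a => (hμ a).trans (hTcomm a).symm)
  let μr := LinearMap.compLeft μ (Fin r)
  have hμr : Function.Injective μr := hμinj.comp_left
  refine ⟨hμr.comp hι, ?_⟩
  let _ : Module A X := Module.compHom X φ
  have _ : IsScalarTower A B B := SMul.comp.isScalarTower φ
  have _ : IsScalarTower A B X := SMul.comp.isScalarTower φ
  set Q := Submodule.span A (Set.range fun x : K => fun i : Fin r => μ (ι x i))
  have hcomap : Q.comap μr = (LinearMap.range ι).restrictScalars A := by
    have hQ : Q = ((LinearMap.range ι).restrictScalars A).map μr := by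
      rw [← Submodule.span_eq ((LinearMap.range ι).restrictScalars A), ← Submodule.span_image,
        Submodule.coe_restrictScalars, LinearMap.coe_range, ← Set.range_comp]
      rfl
    rw [hQ, Submodule.comap_map_eq_of_injective hμr]
  have hN : tSub S t G n (n - 1) ((Fin r → A) ⧸ Q) = LinearMap.range (Q.mkQ ∘ₗ μr) :=
    span_range_smul_eq_range_mkQ_comp Q T (range_compLeft_eq_range_smul (f := φA) hφ hμ _)
  have hker : LinearMap.ker (Q.mkQ ∘ₗ μr) = LinearMap.ker (π.restrictScalars A) := by
    rw [LinearMap.ker_comp, Submodule.ker_mkQ, hcomap, hexact, LinearMap.ker_restrictScalars]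
  exact exists_module_linearEquiv_of_restrictScalars φ (fun _ _ => rfl) <|
    (LinearEquiv.ofEq _ _ hN).trans <| (LinearMap.quotKerEquivRange _).symm.trans <|
      (Submodule.quotEquivOfEq _ _ hker).trans <|
        (π.restrictScalars A).quotKerEquivOfSurjective hπ

end
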